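/- arXiv:2512.17451 — 2 statements merged into one kernel-verified Lean document; each statement's English description precedes it below -/
import Mathlib

section
/- Let S_1, …, S_m be disjoint finite subsets of an integer interval J with |S_j| ≥ s for all j, and let D = diam(∪_j S_j). If edges between integers x, y are present independently with probability 1 − exp(−δ|x−y|^{−α}), then for every pair i ≠ j the probability that some edge connects S_i and S_j is at least q := 1 − exp(−δ s² D^{−α}). Consequently the induced graph on {1,…,m} (with ij an edge iff some edge joins S_i to S_j) stochastically dominates the Erdős–Rényi graph G(m, q). -/
/-!
Two integers of `U` are at distance at most `D`, and at least `s²` pairs join `S i` to `S j`, so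
the probability that no edge joins them is `∏ exp (-δ |x - y|⁻ᵅ) ≤ exp (-δ s² D⁻ᵅ)`. For
different pairs `(i, j)` these events depend on disjoint sets of edges, so the induced graph has
independent edges, present with probabilities `p_ij ≥ q`. Keeping each edge `ij` independently
with probability `q / p_ij` turns it into `G(m, q)` and can only delete edges.
-/

open MeasureTheory

/-- The Bernoulli measure on `Bool` with parameter `p ∈ [0,1]` (clamped at `1`). -/
noncomputable def bern (p : ℝ) : Measure Bool :=
  (PMF.bernoulli (min (Real.toNNReal p) 1) (min_le_right _ _)).toMeasure

/-- The edge set of the complete graph on `Fin m`: pairs `i < j`. -/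
abbrev EdgeIdx (m : ℕ) := {p : Fin m × Fin m // p.1 < p.2}

open ProbabilityTheory Finset Function

section Bernoulli

instance (p : ℝ) : IsProbabilityMeasure (bern p) := by
  unfold bern; infer_instance

lemma bern_singleton_true {p : ℝ} (hp : p ≤ 1) : bern p {true} = ENNReal.ofReal p := by
  rw [bern, PMF.toMeasure_apply_singleton _ _ (measurableSet_singleton _)]
  change ((min (Real.toNNReal p) 1 : NNReal) : ENNReal) = _
  rw [min_eq_left (Real.toNNReal_le_one.2 hp)]
  rfl

lemma bern_singleton_false {p : ℝ} (hp₀ : 0 ≤ p) (hp₁ : p ≤ 1) :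
    bern p {false} = ENNReal.ofReal (1 - p) := by
  rw [show ({false} : Set Bool) = {true}ᶜ from (Bool.compl_singleton true).symm,
    prob_compl_eq_one_sub (measurableSet_singleton _), bern_singleton_true hp₁,
    ENNReal.ofReal_sub _ hp₀, ENNReal.ofReal_one]

lemma MeasureTheory.Measure.bool_ext {μ ν : Measure Bool} [IsProbabilityMeasure μ]
    [IsProbabilityMeasure ν] (h : μ {true} = ν {true}) : μ = ν := by
  refine Measure.ext_of_singleton fun b => ?_
  cases b
  · rw [show ({false} : Set Bool) = {true}ᶜ from (Bool.compl_singleton true).symm,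
      prob_compl_eq_one_sub (measurableSet_singleton _),
      prob_compl_eq_one_sub (measurableSet_singleton _), h]
  · exact h

lemma eq_bern_of_apply_true {μ : Measure Bool} [IsProbabilityMeasure μ] {p : ℝ} (hp : p ≤ 1)
    (h : μ {true} = ENNReal.ofReal p) : μ = bern p :=
  Measure.bool_ext (h.trans (bern_singleton_true hp).symm)

lemma map_and_bern_prod_bern {p r : ℝ} (hp₀ : 0 ≤ p) (hp₁ : p ≤ 1) (hr₀ : 0 ≤ r) (hr₁ : r ≤ 1) :
    ((bern p).prod (bern r)).map (fun z => z.1 && z.2) = bern (p * r) := by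
  have : IsProbabilityMeasure (((bern p).prod (bern r)).map (fun z => z.1 && z.2)) :=
    Measure.isProbabilityMeasure_map (by fun_prop)
  refine eq_bern_of_apply_true (mul_le_one₀ hp₁ hr₀ hr₁) ?_
  rw [Measure.map_apply (by fun_prop) (measurableSet_singleton _)]
  have : (fun z : Bool × Bool => z.1 && z.2) ⁻¹' {true} = {true} ×ˢ {true} := by
    ext ⟨a, b⟩; simp
  rw [this, Measure.prod_prod, bern_singleton_true hp₁, bern_singleton_true hr₁,
    ENNReal.ofReal_mul hp₀]

lemma pi_bern_setOf_exists_eq_true {ι : Type*} [Fintype ι] {x : ι → ℝ} (hx : ∀ i, 0 ≤ x i)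
    (t : Finset ι) :
    Measure.pi (fun i => bern (1 - Real.exp (-x i))) {f | ∃ i ∈ t, f i = true} =
      ENNReal.ofReal (1 - Real.exp (-∑ i ∈ t, x i)) := by
  classical
  have hcompl : {f : ι → Bool | ∃ i ∈ t, f i = true}ᶜ =
      Set.univ.pi fun i => if i ∈ (t : Set ι) then {false} else Set.univ := by
    rw [Set.pi_univ_ite]; ext f; simp
  have hfalse : ∀ i, bern (1 - Real.exp (-x i)) {false} = ENNReal.ofReal (Real.exp (-x i)) :=
    fun i => by
      rw [bern_singleton_false (by simp [hx i]) (by linarith [Real.exp_pos (-x i)]), sub_sub_cancel]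
  rw [ENNReal.ofReal_sub _ (Real.exp_pos _).le, ENNReal.ofReal_one,
    ENNReal.eq_sub_of_add_eq (measure_ne_top _ _) (prob_add_prob_compl .of_discrete), hcompl,
    Measure.pi_pi]
  simp only [apply_ite, measure_univ, Finset.mem_coe, Finset.prod_ite_mem, Finset.univ_inter,
    hfalse]
  rw [← ENNReal.ofReal_prod_of_nonneg fun i _ => (Real.exp_pos _).le, ← Real.exp_sum,
    Finset.sum_neg_distrib]

end Bernoulli

section Coupling

lemma exists_coupling_bern {q p : ℝ} (hq : 0 ≤ q) (hqp : q ≤ p) (hp : p ≤ 1) :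
    ∃ κ : Measure (Bool × Bool), IsProbabilityMeasure κ ∧ κ.map Prod.fst = bern q ∧
      κ.map Prod.snd = bern p ∧ ∀ᵐ z ∂κ, z.1 ≤ z.2 := by
  have hp₀ : 0 ≤ p := hq.trans hqp
  refine ⟨((bern p).prod (bern (q / p))).map (fun z => (z.1 && z.2, z.1)),
    Measure.isProbabilityMeasure_map (by fun_prop), ?_, ?_, ?_⟩
  · rw [Measure.map_map (by fun_prop) (by fun_prop)]
    convert map_and_bern_prod_bern hp₀ hp (div_nonneg hq hp₀) (div_le_one_of_le₀ hqp hp₀) using 2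
    · rfl
    rcases hp₀.eq_or_lt with rfl | hp_pos
    · rw [zero_mul]; exact le_antisymm hqp hq
    · exact (mul_div_cancel₀ q hp_pos.ne').symm
  · rw [Measure.map_map (by fun_prop) (by fun_prop)]
    change ((bern p).prod (bern (q / p))).map Prod.fst = bern p
    rw [Measure.map_fst_prod, measure_univ, one_smul]
  · exact (ae_map_iff (by fun_prop) .of_discrete).2 (ae_of_all _ fun z => Bool.and_le_left _ _)

lemma exists_coupling_pi {ι : Type*} [Fintype ι] {X Y : ι → Type*}
    [∀ i, MeasurableSpace (X i)] [∀ i, MeasurableSpace (Y i)]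
    {μ : ∀ i, Measure (X i)} {ν : ∀ i, Measure (Y i)} {R : ∀ i, Set (X i × Y i)}
    (hR : ∀ i, MeasurableSet (R i))
    (h : ∀ i, ∃ κ : Measure (X i × Y i), IsProbabilityMeasure κ ∧ κ.map Prod.fst = μ i ∧
      κ.map Prod.snd = ν i ∧ ∀ᵐ z ∂κ, z ∈ R i) :
    ∃ ρ : Measure ((∀ i, X i) × (∀ i, Y i)), IsProbabilityMeasure ρ ∧
      ρ.map Prod.fst = Measure.pi μ ∧ ρ.map Prod.snd = Measure.pi ν ∧
      ∀ᵐ z ∂ρ, ∀ i, (z.1 i, z.2 i) ∈ R i := by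
  choose κ hκ hfst hsnd hκR using h
  have hsplit : Measurable fun z : ∀ i, X i × Y i => (fun i => (z i).1, fun i => (z i).2) := by
    fun_prop
  refine ⟨(Measure.pi κ).map fun z => (fun i => (z i).1, fun i => (z i).2),
    Measure.isProbabilityMeasure_map hsplit.aemeasurable, ?_, ?_, ?_⟩
  · rw [Measure.map_map measurable_fst hsplit]
    exact (Measure.pi_map_pi fun i => measurable_fst.aemeasurable).trans (by simp only [hfst])
  · rw [Measure.map_map measurable_snd hsplit]
    exact (Measure.pi_map_pi fun i => measurable_snd.aemeasurable).trans (by simp only [hsnd])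
  · have hmeas : MeasurableSet {y : (∀ i, X i) × (∀ i, Y i) | ∀ i, (y.1 i, y.2 i) ∈ R i} := by
      simp only [Set.ofPred_forall]
      exact .iInter fun i => (hR i).preimage (by fun_prop)
    refine (ae_map_iff hsplit.aemeasurable hmeas).2 (ae_all_iff.2 fun i => ?_)
    exact (Measure.quasiMeasurePreserving_eval κ i).ae (hκR i)

lemma exists_coupling_pi_bern {ι : Type*} [Fintype ι] {q p : ι → ℝ} (hq : ∀ i, 0 ≤ q i)
    (hqp : ∀ i, q i ≤ p i) (hp : ∀ i, p i ≤ 1) :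
    ∃ ρ : Measure ((ι → Bool) × (ι → Bool)), IsProbabilityMeasure ρ ∧
      ρ.map Prod.fst = Measure.pi (fun i => bern (q i)) ∧
      ρ.map Prod.snd = Measure.pi (fun i => bern (p i)) ∧ ∀ᵐ z ∂ρ, ∀ i, z.1 i ≤ z.2 i :=
  exists_coupling_pi (R := fun _ => {z | z.1 ≤ z.2}) (fun _ => .of_discrete)
    fun i => exists_coupling_bern (hq i) (hqp i) (hp i)

end Coupling

section Blocks

variable {ι : Type*} [Fintype ι] {X : ι → Type*} [∀ i, MeasurableSpace (X i)]
  {μ : ∀ i, Measure (X i)} [∀ i, IsProbabilityMeasure (μ i)]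

lemma pi_inter_eq_mul_of_dependsOn {s : Set ι} {C D : Set (∀ i, X i)}
    (hC : DependsOn (· ∈ C) s) (hD : DependsOn (· ∈ D) sᶜ) :
    Measure.pi μ (C ∩ D) = Measure.pi μ C * Measure.pi μ D := by
  classical
  obtain ⟨gC, hgC⟩ := dependsOn_iff_exists_comp.1 hC
  obtain ⟨gD, hgD⟩ := dependsOn_iff_exists_comp.1 hD
  let e := MeasurableEquiv.piEquivPiSubtypeProd X (· ∈ s)
  have he := measurePreserving_piEquivPiSubtypeProd μ (· ∈ s)
  have hCe : C = e ⁻¹' ({u | gC u} ×ˢ Set.univ) := by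
    ext x
    simp only [congrFun hgC x, comp_apply, MeasurableEquiv.piEquivPiSubtypeProd_apply,
      Set.mem_preimage, Set.mem_prod, Set.mem_ofPred_eq, Set.mem_univ, and_true, e]
    rfl
  have hDe : D = e ⁻¹' (Set.univ ×ˢ {v | gD v}) := by
    ext x
    simp only [congrFun hgD x, comp_apply, MeasurableEquiv.piEquivPiSubtypeProd_apply,
      Set.mem_preimage, Set.mem_prod, Set.mem_univ, Set.mem_ofPred_eq, true_and, e]
    rfl
  have hm : ∀ t : Set ((∀ i : {i // i ∈ s}, X i) × (∀ i : {i // i ∉ s}, X i)),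
      Measure.pi μ (e ⁻¹' t) = _ := fun t => he.measure_preimage_equiv t
  rw [hCe, hDe, ← Set.preimage_inter, Set.prod_inter_prod, Set.univ_inter, Set.inter_univ, hm, hm,
    hm, Measure.prod_prod, Measure.prod_prod, Measure.prod_prod, measure_univ, measure_univ,
    mul_one, one_mul]

lemma pi_biInter_eq_prod_of_dependsOn {κ : Type*} {T : κ → Set ι}
    (hT : Pairwise (Disjoint on T)) {C : κ → Set (∀ i, X i)} (hC : ∀ k, DependsOn (· ∈ C k) (T k))
    (t : Finset κ) : Measure.pi μ (⋂ k ∈ t, C k) = ∏ k ∈ t, Measure.pi μ (C k) := by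
  classical
  induction t using Finset.induction_on with
  | empty => simp
  | insert a t ha ih =>
    rw [Finset.set_biInter_insert, Finset.prod_insert ha, ← ih]
    refine pi_inter_eq_mul_of_dependsOn (hC a) fun x y hxy => ?_
    simp only [Set.mem_iInter, eq_iff_iff]
    refine forall₂_congr fun k hk => (hC k fun i hi => hxy i ?_).to_iff
    exact Set.disjoint_left.1 (hT fun hka : k = a => ha (hka ▸ hk)) hi

lemma iIndepFun_of_dependsOn {κ : Type*} {β : κ → Type*} [∀ k, MeasurableSpace (β k)]
    {T : κ → Set ι} (hT : Pairwise (Disjoint on T)) {G : ∀ k, (∀ i, X i) → β k}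
    (hG : ∀ k, DependsOn (G k) (T k)) : iIndepFun G (Measure.pi μ) := by
  refine iIndepFun_iff_measure_inter_preimage_eq_mul.2 fun t sets _ => ?_
  exact pi_biInter_eq_prod_of_dependsOn hT
    (fun k x y hxy => by simp only [Set.mem_preimage, hG k hxy]) t

end Blocks

section CrossPairs

variable {α : Type*} [LinearOrder α]

def crossPairs (U A B : Finset α) : Finset {e : U × U // (e.1 : α) < e.2} :=
  univ.filter fun e => ((e.1.1 : α) ∈ A ∧ (e.1.2 : α) ∈ B) ∨ ((e.1.1 : α) ∈ B ∧ (e.1.2 : α) ∈ A)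

variable {U A B : Finset α}

lemma mem_crossPairs {e : {e : U × U // (e.1 : α) < e.2}} :
    e ∈ crossPairs U A B ↔
      ((e.1.1 : α) ∈ A ∧ (e.1.2 : α) ∈ B) ∨ ((e.1.1 : α) ∈ B ∧ (e.1.2 : α) ∈ A) := by
  simp [crossPairs]

lemma card_mul_card_le_card_crossPairs (hA : A ⊆ U) (hB : B ⊆ U) (hAB : Disjoint A B) :
    #A * #B ≤ #(crossPairs U A B) := by
  classical
  rw [← card_product]
  refine card_le_card_of_surjOn
    (fun e => if (e.1.1 : α) ∈ A then ((e.1.1 : α), (e.1.2 : α)) else (e.1.2, e.1.1)) ?_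
  rintro ⟨x, y⟩ hxy
  obtain ⟨hx, hy⟩ := mem_product.1 hxy
  have hyA : y ∉ A := fun hyA => disjoint_left.1 hAB hyA hy
  rcases lt_or_gt_of_ne (ne_of_mem_of_not_mem hx hyA) with hlt | hgt
  · exact ⟨⟨(⟨x, hA hx⟩, ⟨y, hB hy⟩), hlt⟩, mem_crossPairs.2 (.inl ⟨hx, hy⟩), by simp [hx]⟩
  · exact ⟨⟨(⟨y, hB hy⟩, ⟨x, hA hx⟩), hgt⟩, mem_crossPairs.2 (.inr ⟨hy, hx⟩), by simp [hyA]⟩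

lemma disjoint_crossPairs {κ : Type*} [LinearOrder κ] {S : κ → Finset α}
    (hS : Pairwise (Disjoint on S)) {i j k l : κ} (hij : i < j) (hkl : k < l)
    (hne : (i, j) ≠ (k, l)) :
    Disjoint (crossPairs U (S i) (S j)) (crossPairs U (S k) (S l)) := by
  have hidx : ∀ {a b : κ} {x : α}, x ∈ S a → x ∈ S b → a = b := fun ha hb =>
    by_contra fun hab => disjoint_left.1 (hS hab) ha hb
  refine disjoint_left.2 fun e he he' => ?_
  rcases mem_crossPairs.1 he with ⟨h1, h2⟩ | ⟨h1, h2⟩ <;>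
    rcases mem_crossPairs.1 he' with ⟨h3, h4⟩ | ⟨h3, h4⟩
  · exact hne (Prod.ext (hidx h1 h3) (hidx h2 h4))
  · obtain rfl := hidx h1 h3; obtain rfl := hidx h2 h4; exact lt_asymm hij hkl
  · obtain rfl := hidx h1 h3; obtain rfl := hidx h2 h4; exact lt_asymm hij hkl
  · exact hne (Prod.ext (hidx h2 h4) (hidx h1 h3))

end CrossPairs

lemma le_sum_crossPairs_rpow {U A B : Finset ℤ} (hA : A ⊆ U) (hB : B ⊆ U) (hAB : Disjoint A B)
    {s : ℕ} (hsA : s ≤ #A) (hsB : s ≤ #B) {δ α D : ℝ} (hδ : 0 ≤ δ) (hα : 0 ≤ α) (hD : 0 < D)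
    (hdiam : ∀ x ∈ U, ∀ y ∈ U, |(x : ℝ) - (y : ℝ)| ≤ D) :
    δ * s ^ 2 * D ^ (-α) ≤
      ∑ e ∈ crossPairs U A B, δ * |((e.1.1 : ℤ) : ℝ) - ((e.1.2 : ℤ) : ℝ)| ^ (-α) := by
  have hterm : ∀ e : {e : U × U // (e.1 : ℤ) < e.2},
      δ * D ^ (-α) ≤ δ * |((e.1.1 : ℤ) : ℝ) - ((e.1.2 : ℤ) : ℝ)| ^ (-α) := fun e => by
    have hpos : 0 < |((e.1.1 : ℤ) : ℝ) - ((e.1.2 : ℤ) : ℝ)| :=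
      abs_pos.2 (sub_ne_zero.2 (Int.cast_injective.ne e.2.ne))
    exact mul_le_mul_of_nonneg_left
      (Real.rpow_le_rpow_of_nonpos hpos (hdiam _ e.1.1.2 _ e.1.2.2) (neg_nonpos.2 hα)) hδ
  have hcard : (s : ℝ) ^ 2 ≤ #(crossPairs U A B) := by
    exact_mod_cast (Nat.pow_two s ▸ Nat.mul_le_mul hsA hsB).trans
      (card_mul_card_le_card_crossPairs hA hB hAB)
  calc δ * s ^ 2 * D ^ (-α) = (s : ℝ) ^ 2 * (δ * D ^ (-α)) := by ring
    _ ≤ #(crossPairs U A B) * (δ * D ^ (-α)) := by gcongr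
    _ ≤ _ := by rw [← nsmul_eq_mul]; exact card_nsmul_le_sum _ _ _ fun e _ => hterm e

section CrossGraph

variable {α κ : Type*} [LinearOrder α] [LinearOrder κ]

def crossGraph (U : Finset α) (S : κ → Finset α) (f : {e : U × U // (e.1 : α) < e.2} → Bool)
    (ij : {p : κ × κ // p.1 < p.2}) : Bool :=
  decide (∃ e ∈ crossPairs U (S ij.1.1) (S ij.1.2), f e = true)

lemma map_crossGraph_pi_bern [Fintype κ] {U : Finset α} {S : κ → Finset α}
    (hS : Pairwise (Disjoint on S)) {x : {e : U × U // (e.1 : α) < e.2} → ℝ}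
    (hx : ∀ e, 0 ≤ x e) :
    (Measure.pi fun e => bern (1 - Real.exp (-x e))).map (crossGraph U S) =
      Measure.pi fun ij : {p : κ × κ // p.1 < p.2} =>
        bern (1 - Real.exp (-∑ e ∈ crossPairs U (S ij.1.1) (S ij.1.2), x e)) := by
  let T (ij : {p : κ × κ // p.1 < p.2}) : Set {e : U × U // (e.1 : α) < e.2} :=
    crossPairs U (S ij.1.1) (S ij.1.2)
  have hT : Pairwise (Disjoint on T) := fun ij kl hne =>
    disjoint_coe.2 (disjoint_crossPairs hS ij.2 kl.2 fun h => hne (Subtype.ext h))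
  have hG : ∀ ij, DependsOn (fun f => crossGraph U S f ij) (T ij) := fun ij f g hfg =>
    decide_eq_decide.2 (exists_congr fun e => and_congr_right fun he => by rw [hfg e he])
  refine ((iIndepFun_of_dependsOn hT hG).map_fun_eq_pi_map fun _ => .of_discrete).trans ?_
  congr with ij : 1
  have : IsProbabilityMeasure ((Measure.pi fun e => bern (1 - Real.exp (-x e))).map
      fun f => crossGraph U S f ij) := Measure.isProbabilityMeasure_map .of_discrete
  refine eq_bern_of_apply_true (sub_le_self _ (Real.exp_pos _).le) ?_
  rw [Measure.map_apply_of_aemeasurable .of_discrete (measurableSet_singleton _)]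
  exact (congrArg _ (by ext f; simp [crossGraph])).trans (pi_bern_setOf_exists_eq_true hx _)

end CrossGraph

theorem stmt_7_general (m : ℕ) (S : Fin m → Finset ℤ)
    (hdisj : ∀ i j : Fin m, i ≠ j → Disjoint (S i) (S j))
    (s : ℕ) (hcard : ∀ j, s ≤ (S j).card)
    (δ α D : ℝ) (hδ : 0 < δ) (hα : 1 < α) (hD : 0 < D)
    (U : Finset ℤ) (hU : U = (Finset.univ : Finset (Fin m)).biUnion S)
    (hdiam : ∀ x ∈ U, ∀ y ∈ U, |(x : ℝ) - (y : ℝ)| ≤ D)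
    (q : ℝ) (hq : q = 1 - Real.exp (-δ * (s : ℝ) ^ 2 * D ^ (-α)))
    (P : Measure ({e : ↥U × ↥U // (e.1 : ℤ) < (e.2 : ℤ)} → Bool))
    (hP : P = Measure.pi fun e : {e : ↥U × ↥U // (e.1 : ℤ) < (e.2 : ℤ)} =>
      bern (1 - Real.exp (-δ * |((e.1.1 : ℤ) : ℝ) - ((e.1.2 : ℤ) : ℝ)| ^ (-α)))) :
    (∀ i j : Fin m, i ≠ j →
      ENNReal.ofReal q ≤ P {f | ∃ e : {e : ↥U × ↥U // (e.1 : ℤ) < (e.2 : ℤ)},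
        (((e.1.1 : ℤ) ∈ S i ∧ (e.1.2 : ℤ) ∈ S j) ∨
         ((e.1.1 : ℤ) ∈ S j ∧ (e.1.2 : ℤ) ∈ S i)) ∧ f e = true}) ∧
    ∃ ρ : Measure ((EdgeIdx m → Bool) × (EdgeIdx m → Bool)),
      IsProbabilityMeasure ρ ∧
      ρ.map Prod.fst = Measure.pi (fun _ : EdgeIdx m => bern q) ∧
      ρ.map Prod.snd = P.map (fun f (ij : EdgeIdx m) =>
        decide (∃ e : {e : ↥U × ↥U // (e.1 : ℤ) < (e.2 : ℤ)},
          (((e.1.1 : ℤ) ∈ S ij.1.1 ∧ (e.1.2 : ℤ) ∈ S ij.1.2) ∨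
           ((e.1.1 : ℤ) ∈ S ij.1.2 ∧ (e.1.2 : ℤ) ∈ S ij.1.1)) ∧ f e = true)) ∧
      ∀ᵐ z ∂ρ, ∀ e, z.1 e ≤ z.2 e := by
  set x : {e : ↥U × ↥U // (e.1 : ℤ) < (e.2 : ℤ)} → ℝ :=
    fun e => δ * |((e.1.1 : ℤ) : ℝ) - ((e.1.2 : ℤ) : ℝ)| ^ (-α)
  have hx : ∀ e, 0 ≤ x e := fun e => by positivity
  have hPx : P = Measure.pi fun e => bern (1 - Real.exp (-x e)) := by simp only [hP, x, neg_mul]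
  have hS : Pairwise (Disjoint on S) := fun i j hij => hdisj i j hij
  have hSU : ∀ i, S i ⊆ U := fun i => hU ▸ subset_biUnion_of_mem S (mem_univ i)
  have hqle : ∀ i j, i ≠ j → q ≤ 1 - Real.exp (-∑ e ∈ crossPairs U (S i) (S j), x e) :=
    fun i j hij => by
      have := le_sum_crossPairs_rpow (hSU i) (hSU j) (hS hij) (hcard i) (hcard j) hδ.le
        (zero_le_one.trans hα.le) hD hdiam
      rw [hq, neg_mul, neg_mul]
      exact sub_le_sub_left (Real.exp_le_exp.2 (neg_le_neg this)) 1
  refine ⟨fun i j hij => (ENNReal.ofReal_le_ofReal (hqle i j hij)).trans_eq ?_, ?_⟩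
  · rw [hPx, ← pi_bern_setOf_exists_eq_true hx]
    simp only [mem_crossPairs]
  have hq0 : 0 ≤ q := by
    rw [hq, sub_nonneg, Real.exp_le_one_iff, neg_mul, neg_mul, neg_nonpos]; positivity
  obtain ⟨ρ, hρ, hfst, hsnd, hle⟩ := exists_coupling_pi_bern (fun _ => hq0)
    (fun ij : EdgeIdx m => hqle _ _ ij.2.ne) fun _ => sub_le_self _ (Real.exp_pos _).le
  refine ⟨ρ, hρ, hfst, hsnd.trans ?_, hle⟩
  rw [← map_crossGraph_pi_bern hS hx, ← hPx]
  congr with f ij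
  simp [crossGraph, mem_crossPairs]

/-- Disjoint sets `S 1, …, S m ⊆ ℤ` with `|S j| ≥ s` and union of diameter `≤ D`:
with independent edges between integers present with probability `1 - exp (-δ|x-y|⁻ᵅ)`,
each pair `i ≠ j` is connected by some edge with probability at least
`q = 1 - exp (-δ s² D⁻ᵅ)`, and the induced graph on `{1, …, m}` stochastically
dominates the Erdős–Rényi graph `G(m, q)`. -/
theorem stmt_7 (m : ℕ) (S : Fin m → Finset ℤ)
    (hdisj : ∀ i j : Fin m, i ≠ j → Disjoint (S i) (S j))
    (s : ℕ) (hs : 1 ≤ s) (hcard : ∀ j, s ≤ (S j).card)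
    (δ α D : ℝ) (hδ : 0 < δ) (hα : 1 < α) (hD : 0 < D)
    (U : Finset ℤ) (hU : U = (Finset.univ : Finset (Fin m)).biUnion S)
    (hdiam : ∀ x ∈ U, ∀ y ∈ U, |(x : ℝ) - (y : ℝ)| ≤ D)
    (q : ℝ) (hq : q = 1 - Real.exp (-δ * (s : ℝ) ^ 2 * D ^ (-α)))
    (P : Measure ({e : ↥U × ↥U // (e.1 : ℤ) < (e.2 : ℤ)} → Bool))
    (hP : P = Measure.pi fun e : {e : ↥U × ↥U // (e.1 : ℤ) < (e.2 : ℤ)} =>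
      bern (1 - Real.exp (-δ * |((e.1.1 : ℤ) : ℝ) - ((e.1.2 : ℤ) : ℝ)| ^ (-α)))) :
    (∀ i j : Fin m, i ≠ j →
      ENNReal.ofReal q ≤ P {f | ∃ e : {e : ↥U × ↥U // (e.1 : ℤ) < (e.2 : ℤ)},
        (((e.1.1 : ℤ) ∈ S i ∧ (e.1.2 : ℤ) ∈ S j) ∨
         ((e.1.1 : ℤ) ∈ S j ∧ (e.1.2 : ℤ) ∈ S i)) ∧ f e = true}) ∧
    ∃ ρ : Measure ((EdgeIdx m → Bool) × (EdgeIdx m → Bool)),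
      IsProbabilityMeasure ρ ∧
      ρ.map Prod.fst = Measure.pi (fun _ : EdgeIdx m => bern q) ∧
      ρ.map Prod.snd = P.map (fun f (ij : EdgeIdx m) =>
        decide (∃ e : {e : ↥U × ↥U // (e.1 : ℤ) < (e.2 : ℤ)},
          (((e.1.1 : ℤ) ∈ S ij.1.1 ∧ (e.1.2 : ℤ) ∈ S ij.1.2) ∨
           ((e.1.1 : ℤ) ∈ S ij.1.2 ∧ (e.1.2 : ℤ) ∈ S ij.1.1)) ∧ f e = true)) ∧
      ∀ᵐ z ∂ρ, ∀ e, z.1 e ≤ z.2 e :=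
  stmt_7_general m S hdisj s hcard δ α D hδ hα hD U hU hdiam q hq P hP
end

section
/- Let γ ∈ (0,1), α ∈ (1,2) with 2γ − α > 0, δ > 0, and define c_n = max(n^{2/(1−γ)}, c_0), M_n = M_1·∏_{k=2}^n c_k, d_n = c_n^{γ−1}. Then for any ε_1 > 0 there exist M_1 and c_0 large enough so that for all n ≥ 2, 2·exp(γ log c_n − δ c_n^{−α}(c_n^{γ}−1) M_{n−1}^{2γ−α}) ≤ ε_1 d_n / 2. -/
open Real

/-- `c n = max (n ^ (2/(1-γ))) c₀`. -/
noncomputable def cseq (γ : ℝ) (c0 : ℕ) (n : ℕ) : ℝ :=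
  max ((n : ℝ) ^ (2 / (1 - γ))) (c0 : ℝ)

/-- `M n = M₁ · ∏_{k=2}^n c k`. -/
noncomputable def Mseq (γ : ℝ) (c0 : ℕ) (M1 : ℝ) (n : ℕ) : ℝ :=
  M1 * ∏ k ∈ Finset.Icc 2 n, cseq γ c0 k

/-- For `γ ∈ (0,1)`, `α ∈ (1,2)` with `2γ - α > 0` and `δ > 0`, for any `ε₁ > 0` one can
choose `M₁` and `c₀` large enough that for all `n ≥ 2`,
`2 exp (γ log c_n - δ c_n^{-α} (c_n^γ - 1) M_{n-1}^{2γ-α}) ≤ ε₁ d_n / 2`,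
where `d_n = c_n^{γ-1}`. -/
theorem stmt_10 (γ α δ ε1 : ℝ) (hγ0 : 0 < γ) (hγ1 : γ < 1)
    (hα1 : 1 < α) (hα2 : α < 2) (hγα : 0 < 2 * γ - α) (hδ : 0 < δ) (hε1 : 0 < ε1) :
    ∃ (M1 : ℝ) (c0 : ℕ), 1 ≤ M1 ∧ 1 ≤ c0 ∧
      ∀ n : ℕ, 2 ≤ n →
        2 * Real.exp (γ * Real.log (cseq γ c0 n) -
            δ * (cseq γ c0 n) ^ (-α) * ((cseq γ c0 n) ^ γ - 1) *
              (Mseq γ c0 M1 (n - 1)) ^ (2 * γ - α)) ≤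
          ε1 * (cseq γ c0 n) ^ (γ - 1) / 2 := by
  have h1γ : 0 < 1 - γ := by linarith
  obtain ⟨β, hβdef⟩ : ∃ x : ℝ, x = 2 * γ - α := ⟨_, rfl⟩
  have hβ : 0 < β := by rw [hβdef]; exact hγα
  obtain ⟨A, hAdef⟩ : ∃ x : ℝ, x = 2 * α / (1 - γ) := ⟨_, rfl⟩
  have hA : 0 < A := by rw [hAdef]; positivity
  -- choose c0 opaque with the needed properties
  obtain ⟨c0, hc0_1, hc0a, hc0b⟩ :
      ∃ c0 : ℕ, 1 ≤ c0 ∧ Real.exp ((A + 1) / β) ≤ (c0:ℝ) ∧ (2:ℝ) ^ (1/γ) ≤ (c0:ℝ) := by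
    refine ⟨⌈max (Real.exp ((A + 1) / β)) ((2:ℝ) ^ (1/γ))⌉₊ + 1, Nat.le_add_left 1 _, ?_, ?_⟩
    · have h := Nat.le_ceil (max (Real.exp ((A + 1) / β)) ((2:ℝ) ^ (1/γ)))
      have h2 := le_max_left (Real.exp ((A + 1) / β)) ((2:ℝ) ^ (1/γ))
      push_cast
      linarith
    · have h := Nat.le_ceil (max (Real.exp ((A + 1) / β)) ((2:ℝ) ^ (1/γ)))
      have h2 := le_max_right (Real.exp ((A + 1) / β)) ((2:ℝ) ^ (1/γ))
      push_cast
      linarith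
  have hc0R : (1:ℝ) ≤ (c0:ℝ) := by exact_mod_cast hc0_1
  have hc0pos : (0:ℝ) < (c0:ℝ) := by linarith
  have hlogc0 : (A + 1) / β ≤ Real.log (c0:ℝ) :=
    (Real.le_log_iff_exp_le hc0pos).mpr hc0a
  have hβlog : A + 1 ≤ β * Real.log (c0:ℝ) := by
    rw [div_le_iff₀ hβ] at hlogc0; linarith
  have hlogc0nn : 0 ≤ Real.log (c0:ℝ) := Real.log_nonneg hc0R
  -- the constant C
  obtain ⟨C, hC0, hCdef⟩ :
      ∃ C : ℝ, 0 < C ∧ C = 2 / (1 - γ) + Real.log (c0:ℝ) + |Real.log (ε1/4)| := by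
    refine ⟨_, ?_, rfl⟩
    have h2 : (0:ℝ) < 2 / (1 - γ) := by positivity
    have h3 := abs_nonneg (Real.log (ε1/4))
    linarith
  -- the constant K and M1
  obtain ⟨K, hK1, hKge⟩ :
      ∃ K : ℝ, 1 ≤ K ∧ C * (c0:ℝ) ^ α * Real.exp (A + 1) / δ ≤ K :=
    ⟨max 1 (C * (c0:ℝ) ^ α * Real.exp (A + 1) / δ), le_max_left _ _, le_max_right _ _⟩
  have hKpos : (0:ℝ) < K := by linarith
  obtain ⟨M1, hM1, hM1β⟩ : ∃ M1 : ℝ, 1 ≤ M1 ∧ M1 ^ β = K := by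
    refine ⟨K ^ (1/β), Real.one_le_rpow hK1 (by positivity), ?_⟩
    rw [← Real.rpow_mul hKpos.le, one_div_mul_cancel hβ.ne', Real.rpow_one]
  have hM1pos : (0:ℝ) < M1 := by linarith
  refine ⟨M1, c0, hM1, hc0_1, ?_⟩
  intro n hn
  have hn2 : (2:ℝ) ≤ (n:ℝ) := by exact_mod_cast hn
  have hn1 : (1:ℝ) ≤ (n:ℝ) := by linarith
  have hnpos : (0:ℝ) < (n:ℝ) := by linarith
  rw [← hβdef]
  obtain ⟨c, hceq⟩ : ∃ x : ℝ, x = cseq γ c0 n := ⟨_, rfl⟩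
  obtain ⟨M, hMeq⟩ : ∃ x : ℝ, x = Mseq γ c0 M1 (n - 1) := ⟨_, rfl⟩
  rw [← hceq, ← hMeq]
  have hcge : (c0:ℝ) ≤ c := by rw [hceq]; exact le_max_right _ _
  have hc1 : (1:ℝ) ≤ c := hc0R.trans hcge
  have hcpos : (0:ℝ) < c := by linarith
  have hnr1 : (1:ℝ) ≤ (n:ℝ) ^ (2/(1-γ)) := Real.one_le_rpow hn1 (by positivity)
  have hcub : c ≤ (n:ℝ) ^ (2/(1-γ)) * (c0:ℝ) := by
    rw [hceq]
    unfold cseq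
    apply max_le
    · exact le_mul_of_one_le_right (by positivity) hc0R
    · exact le_mul_of_one_le_left hc0pos.le hnr1
  -- lower bound on M
  have hMlb : M1 * (c0:ℝ) ^ ((n:ℝ) - 2) ≤ M := by
    have hcard : (Finset.Icc 2 (n-1)).card = n - 2 := by
      rw [Nat.card_Icc]; omega
    have hprod : (c0:ℝ) ^ (n - 2 : ℕ) ≤ ∏ k ∈ Finset.Icc 2 (n-1), cseq γ c0 k := by
      rw [← hcard, ← Finset.prod_const]
      exact Finset.prod_le_prod (fun i _ => hc0pos.le) (fun i _ => le_max_right _ _)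
    have hcast : (c0:ℝ) ^ ((n:ℝ) - 2) = (c0:ℝ) ^ (n - 2 : ℕ) := by
      rw [← Real.rpow_natCast (c0:ℝ) (n-2)]
      congr 1
      push_cast [Nat.cast_sub hn]
      ring
    rw [hcast, hMeq]
    unfold Mseq
    exact mul_le_mul_of_nonneg_left hprod (by linarith)
  have hMpos : (0:ℝ) < M1 * (c0:ℝ) ^ ((n:ℝ) - 2) := by positivity
  -- c^γ - 1 ≥ 1
  have hcγ : (2:ℝ) ≤ c ^ γ := by
    have h1 : ((2:ℝ) ^ (1/γ)) ^ γ ≤ c ^ γ :=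
      Real.rpow_le_rpow (by positivity) (hc0b.trans hcge) hγ0.le
    rwa [← Real.rpow_mul (by norm_num), one_div_mul_cancel hγ0.ne', Real.rpow_one] at h1
  -- M^β lower bound
  have hMβ : M1 ^ β * (c0:ℝ) ^ (((n:ℝ) - 2) * β) ≤ M ^ β := by
    have h1 : (M1 * (c0:ℝ) ^ ((n:ℝ) - 2)) ^ β ≤ M ^ β :=
      Real.rpow_le_rpow hMpos.le hMlb hβ.le
    rwa [Real.mul_rpow hM1pos.le (by positivity), ← Real.rpow_mul hc0pos.le] at h1
  -- c^(-α) lower bound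
  have hcα : (n:ℝ) ^ (-A) * (c0:ℝ) ^ (-α) ≤ c ^ (-α) := by
    have h1 : ((n:ℝ) ^ (2/(1-γ)) * (c0:ℝ)) ^ (-α) ≤ c ^ (-α) :=
      Real.rpow_le_rpow_of_nonpos hcpos hcub (by linarith)
    rw [Real.mul_rpow (by positivity) hc0pos.le, ← Real.rpow_mul hnpos.le] at h1
    have hAe : 2/(1-γ) * (-α) = -A := by rw [hAdef]; ring
    rwa [hAe] at h1
  -- combine into lower bound for the subtracted term
  have hstep : δ * ((n:ℝ) ^ (-A) * (c0:ℝ) ^ (-α)) * 1 *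
      (M1 ^ β * (c0:ℝ) ^ (((n:ℝ) - 2) * β)) ≤ δ * c ^ (-α) * (c ^ γ - 1) * M ^ β := by
    gcongr <;>
      first
        | exact mul_nonneg (mul_nonneg hδ.le (Real.rpow_pos_of_pos hcpos _).le) (by linarith)
        | positivity
        | linarith
  -- exponential lower bound
  have hexp : Real.exp (-(A+1)) * (n:ℝ) ≤ (n:ℝ) ^ (-A) * (c0:ℝ) ^ (((n:ℝ) - 2) * β) := by
    have e1 : (n:ℝ) ^ (-A) = Real.exp (Real.log (n:ℝ) * (-A)) :=
      Real.rpow_def_of_pos hnpos _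
    have e2 : (c0:ℝ) ^ (((n:ℝ) - 2) * β) = Real.exp (Real.log (c0:ℝ) * (((n:ℝ) - 2) * β)) :=
      Real.rpow_def_of_pos hc0pos _
    rw [e1, e2, ← Real.exp_add]
    have hlogn : Real.log (n:ℝ) ≤ (n:ℝ) - 1 := Real.log_le_sub_one_of_pos hnpos
    have h3 : -(A * ((n:ℝ) - 1)) ≤ Real.log (n:ℝ) * (-A) := by
      have := mul_le_mul_of_nonneg_left hlogn hA.le
      linarith
    have h4 : (A + 1) * ((n:ℝ) - 2) ≤ Real.log (c0:ℝ) * (((n:ℝ) - 2) * β) := by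
      have hn2' : (0:ℝ) ≤ (n:ℝ) - 2 := by linarith
      have := mul_le_mul_of_nonneg_right hβlog hn2'
      linarith
    have h5 : -(A+1) + ((n:ℝ) - 1) ≤
        Real.log (n:ℝ) * (-A) + Real.log (c0:ℝ) * (((n:ℝ) - 2) * β) := by linarith
    calc Real.exp (-(A+1)) * (n:ℝ) ≤ Real.exp (-(A+1)) * Real.exp ((n:ℝ) - 1) := by
          have h7 := Real.add_one_le_exp ((n:ℝ) - 1)
          have h6 : (n:ℝ) ≤ Real.exp ((n:ℝ) - 1) := by linarith
          exact mul_le_mul_of_nonneg_left h6 (Real.exp_pos _).le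
      _ = Real.exp (-(A+1) + ((n:ℝ) - 1)) := (Real.exp_add _ _).symm
      _ ≤ Real.exp (Real.log (n:ℝ) * (-A) + Real.log (c0:ℝ) * (((n:ℝ) - 2) * β)) :=
          Real.exp_le_exp.mpr h5
  -- key constant comparison
  have hconst : C ≤ δ * (c0:ℝ) ^ (-α) * M1 ^ β * Real.exp (-(A+1)) := by
    rw [hM1β]
    have h1 : δ * (c0:ℝ) ^ (-α) * (C * (c0:ℝ) ^ α * Real.exp (A + 1) / δ) * Real.exp (-(A+1))
        ≤ δ * (c0:ℝ) ^ (-α) * K * Real.exp (-(A+1)) := by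
      gcongr
    have h2 : δ * (c0:ℝ) ^ (-α) * (C * (c0:ℝ) ^ α * Real.exp (A + 1) / δ) * Real.exp (-(A+1))
        = C := by
      have hcane : (c0:ℝ) ^ α ≠ 0 := (Real.rpow_pos_of_pos hc0pos α).ne'
      rw [Real.rpow_neg hc0pos.le, Real.exp_neg]
      field_simp
    linarith
  -- the key inequality
  have hkey : Real.log c - Real.log (ε1/4) ≤ δ * c ^ (-α) * (c ^ γ - 1) * M ^ β := by
    have hL : Real.log c - Real.log (ε1/4) ≤ C * (n:ℝ) := by
      have l1 : Real.log c ≤ Real.log ((n:ℝ) ^ (2/(1-γ)) * (c0:ℝ)) :=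
        Real.log_le_log hcpos hcub
      have l2 : Real.log ((n:ℝ) ^ (2/(1-γ)) * (c0:ℝ)) =
          (2/(1-γ)) * Real.log (n:ℝ) + Real.log (c0:ℝ) := by
        rw [Real.log_mul (by positivity) hc0pos.ne', Real.log_rpow hnpos]
      have hlogn : Real.log (n:ℝ) ≤ (n:ℝ) := by
        have := Real.log_le_sub_one_of_pos hnpos; linarith
      have l3 : (2/(1-γ)) * Real.log (n:ℝ) ≤ (2/(1-γ)) * (n:ℝ) := by
        have h8 : (0:ℝ) ≤ 2/(1-γ) := by positivity
        exact mul_le_mul_of_nonneg_left hlogn h8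
      have l4 : Real.log (c0:ℝ) ≤ Real.log (c0:ℝ) * (n:ℝ) :=
        le_mul_of_one_le_right hlogc0nn hn1
      have l5 : -Real.log (ε1/4) ≤ |Real.log (ε1/4)| := neg_le_abs _
      have l6 : |Real.log (ε1/4)| ≤ |Real.log (ε1/4)| * (n:ℝ) :=
        le_mul_of_one_le_right (abs_nonneg _) hn1
      have l7 : C * (n:ℝ) =
          (2/(1-γ)) * (n:ℝ) + Real.log (c0:ℝ) * (n:ℝ) + |Real.log (ε1/4)| * (n:ℝ) := by
        rw [hCdef]; ring
      linarith
    have hR : C * (n:ℝ) ≤ δ * ((n:ℝ) ^ (-A) * (c0:ℝ) ^ (-α)) * 1 *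
        (M1 ^ β * (c0:ℝ) ^ (((n:ℝ) - 2) * β)) := by
      have r1 : δ * (c0:ℝ) ^ (-α) * M1 ^ β * (Real.exp (-(A+1)) * (n:ℝ)) ≤
          δ * (c0:ℝ) ^ (-α) * M1 ^ β * ((n:ℝ) ^ (-A) * (c0:ℝ) ^ (((n:ℝ) - 2) * β)) := by
        gcongr
      have r2 : C * (n:ℝ) ≤ δ * (c0:ℝ) ^ (-α) * M1 ^ β * Real.exp (-(A+1)) * (n:ℝ) :=
        mul_le_mul_of_nonneg_right hconst hnpos.le
      calc C * (n:ℝ) ≤ δ * (c0:ℝ) ^ (-α) * M1 ^ β * Real.exp (-(A+1)) * (n:ℝ) := r2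
        _ = δ * (c0:ℝ) ^ (-α) * M1 ^ β * (Real.exp (-(A+1)) * (n:ℝ)) := by ring
        _ ≤ δ * (c0:ℝ) ^ (-α) * M1 ^ β * ((n:ℝ) ^ (-A) * (c0:ℝ) ^ (((n:ℝ) - 2) * β)) := r1
        _ = δ * ((n:ℝ) ^ (-A) * (c0:ℝ) ^ (-α)) * 1 *
            (M1 ^ β * (c0:ℝ) ^ (((n:ℝ) - 2) * β)) := by ring
    linarith
  -- conclude
  have hX : γ * Real.log c - δ * c ^ (-α) * (c ^ γ - 1) * M ^ β ≤
      Real.log (ε1/4) + (γ - 1) * Real.log c := by linarith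
  calc 2 * Real.exp (γ * Real.log c - δ * c ^ (-α) * (c ^ γ - 1) * M ^ β)
      ≤ 2 * Real.exp (Real.log (ε1/4) + (γ - 1) * Real.log c) := by
        have := Real.exp_le_exp.mpr hX
        linarith
    _ = 2 * (ε1/4 * c ^ (γ - 1)) := by
        rw [Real.exp_add, Real.exp_log (by positivity), Real.rpow_def_of_pos hcpos,
          mul_comm (Real.log c) (γ - 1)]
    _ = ε1 * c ^ (γ - 1) / 2 := by ring
end
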